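/- arXiv:1808.00923 — 7 statements merged into one kernel-verified Lean document; each statement's English description precedes it below -/
import Mathlib

section
/- In any convex semilattice (a set with a semilattice operation ⊕ and binary convex combination operations +_p for p ∈ (0,1) satisfying the distributivity axiom (x ⊕ y) +_p z = (x +_p z) ⊕ (y +_p z)), the generalized convexity law holds: for all n, elements a₁,…,aₙ and probabilities p₁,…,pₙ with Σpᵢ = 1, we have a₁ ⊕ ⋯ ⊕ aₙ ⊕ (Σᵢ pᵢaᵢ) = a₁ ⊕ ⋯ ⊕ aₙ. -/
/-- A convex semilattice: a semilattice operation `op` together with binary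
convex combination operations `pc p` for `p ∈ (0,1)`, satisfying the
distributivity axiom. -/
structure ConvexSemilattice (A : Type*) where
  op : A → A → A
  pc : ℝ → A → A → A
  op_assoc : ∀ x y z, op (op x y) z = op x (op y z)
  op_comm : ∀ x y, op x y = op y x
  op_idem : ∀ x, op x x = x
  pc_assoc : ∀ p q x y z, p ∈ Set.Ioo (0:ℝ) 1 → q ∈ Set.Ioo (0:ℝ) 1 →
      pc p (pc q x y) z = pc (p * q) x (pc (p * (1 - q) / (1 - p * q)) y z)
  pc_comm : ∀ p x y, p ∈ Set.Ioo (0:ℝ) 1 → pc p x y = pc (1 - p) y x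
  pc_idem : ∀ p x, p ∈ Set.Ioo (0:ℝ) 1 → pc p x x = x
  distrib : ∀ p x y z, p ∈ Set.Ioo (0:ℝ) 1 →
      pc p (op x y) z = op (pc p x z) (pc p y z)

/-- The `n`-ary convex combination `Σᵢ pᵢ aᵢ`, defined inductively from the
binary operations in the standard way (Stone's definition). -/
noncomputable def ConvexSemilattice.csum {A : Type*} (L : ConvexSemilattice A) :
    (n : ℕ) → (Fin (n + 1) → ℝ) → (Fin (n + 1) → A) → A
  | 0, _, a => a 0
  | n + 1, p, a =>
      if p (Fin.last (n + 1)) = 1 then a (Fin.last (n + 1))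
      else if p (Fin.last (n + 1)) = 0 then
        L.csum n (fun j => p j.castSucc) (fun j => a j.castSucc)
      else
        L.pc (1 - p (Fin.last (n + 1)))
          (L.csum n (fun j => p j.castSucc / (1 - p (Fin.last (n + 1))))
            (fun j => a j.castSucc))
          (a (Fin.last (n + 1)))

/-- The iterated semilattice operation `a₁ ⊕ ⋯ ⊕ aₙ`. -/
def ConvexSemilattice.bigOp {A : Type*} (L : ConvexSemilattice A) :
    (n : ℕ) → (Fin (n + 1) → A) → A
  | 0, a => a 0
  | n + 1, a => L.op (L.bigOp n (fun j => a j.castSucc)) (a (Fin.last (n + 1)))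

lemma ConvexSemilattice.one_sub_mem {p : ℝ} (hp : p ∈ Set.Ioo (0:ℝ) 1) :
    1 - p ∈ Set.Ioo (0:ℝ) 1 := ⟨by linarith [hp.2], by linarith [hp.1]⟩

lemma ConvexSemilattice.rdistrib {A : Type*} (L : ConvexSemilattice A)
    (p : ℝ) (x y z : A) (hp : p ∈ Set.Ioo (0:ℝ) 1) :
    L.pc p z (L.op x y) = L.op (L.pc p z x) (L.pc p z y) := by
  rw [L.pc_comm p z _ hp, L.distrib _ _ _ _ (one_sub_mem hp),
    ← L.pc_comm p z x hp, ← L.pc_comm p z y hp]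

lemma ConvexSemilattice.absorb {A : Type*} (L : ConvexSemilattice A)
    (p : ℝ) (x y : A) (hp : p ∈ Set.Ioo (0:ℝ) 1) :
    L.op (L.op x y) (L.pc p x y) = L.op x y := by
  haveI : Std.Associative L.op := ⟨L.op_assoc⟩
  haveI : Std.Commutative L.op := ⟨L.op_comm⟩
  have key : L.op x y = L.op (L.op x (L.pc p x y)) (L.op (L.pc p y x) y) := by
    calc L.op x y = L.pc p (L.op x y) (L.op x y) := (L.pc_idem _ _ hp).symm
      _ = L.op (L.pc p x (L.op x y)) (L.pc p y (L.op x y)) := L.distrib _ _ _ _ hp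
      _ = L.op (L.op (L.pc p x x) (L.pc p x y)) (L.op (L.pc p y x) (L.pc p y y)) := by
          rw [L.rdistrib _ _ _ _ hp, L.rdistrib _ _ _ _ hp]
      _ = L.op (L.op x (L.pc p x y)) (L.op (L.pc p y x) y) := by
          rw [L.pc_idem _ _ hp, L.pc_idem _ _ hp]
  conv_lhs => rw [key]
  conv_rhs => rw [key]
  set B := L.pc p x y
  set C := L.pc p y x
  have h1 : L.op (L.op (L.op x B) (L.op C y)) B = L.op (L.op x (L.op C y)) (L.op B B) := by
    ac_rfl
  rw [h1, L.op_idem]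
  ac_rfl

lemma ConvexSemilattice.absorb2 {A : Type*} (L : ConvexSemilattice A)
    (p : ℝ) (B S x : A) (hp : p ∈ Set.Ioo (0:ℝ) 1) (hBS : L.op B S = B) :
    L.op (L.op B x) (L.pc p S x) = L.op B x := by
  haveI : Std.Associative L.op := ⟨L.op_assoc⟩
  haveI : Std.Commutative L.op := ⟨L.op_comm⟩
  have hab := L.absorb p S x hp
  calc L.op (L.op B x) (L.pc p S x)
      = L.op (L.op (L.op B S) x) (L.pc p S x) := by rw [hBS]
    _ = L.op B (L.op (L.op S x) (L.pc p S x)) := by ac_rfl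
    _ = L.op B (L.op S x) := by rw [hab]
    _ = L.op (L.op B S) x := by ac_rfl
    _ = L.op B x := by rw [hBS]

/-- Generalized convexity law: `a₁ ⊕ ⋯ ⊕ aₙ ⊕ (Σᵢ pᵢ aᵢ) = a₁ ⊕ ⋯ ⊕ aₙ`. -/
theorem convexSemilattice_generalized_convexity
    {A : Type*} (L : ConvexSemilattice A) (n : ℕ)
    (p : Fin (n + 1) → ℝ) (a : Fin (n + 1) → A)
    (hp : ∀ i, 0 ≤ p i) (hsum : ∑ i, p i = 1) :
    L.op (L.bigOp n a) (L.csum n p a) = L.bigOp n a := by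
  haveI : Std.Associative L.op := ⟨L.op_assoc⟩
  haveI : Std.Commutative L.op := ⟨L.op_comm⟩
  induction n with
  | zero =>
      simp only [ConvexSemilattice.csum, ConvexSemilattice.bigOp, L.op_idem]
  | succ n ih =>
      have hlast_le : p (Fin.last (n + 1)) ≤ 1 := by
        rw [← hsum]
        exact Finset.single_le_sum (fun i _ => hp i) (Finset.mem_univ _)
      have hsplit : ∑ j : Fin (n + 1), p j.castSucc + p (Fin.last (n + 1)) = 1 := by
        rw [← Fin.sum_univ_castSucc]; exact hsum
      rw [ConvexSemilattice.csum]
      show L.op (L.op (L.bigOp n fun j => a j.castSucc) (a (Fin.last (n+1)))) _ =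
        L.op (L.bigOp n fun j => a j.castSucc) (a (Fin.last (n+1)))
      set B := L.bigOp n (fun j => a j.castSucc) with hB
      set x := a (Fin.last (n + 1))
      split_ifs with h1 h0
      · rw [L.op_assoc, L.op_idem]
      · have hs : ∑ j : Fin (n + 1), p j.castSucc = 1 := by rw [h0] at hsplit; linarith
        have hIH := ih (fun j => p j.castSucc) (fun j => a j.castSucc)
          (fun i => hp i.castSucc) hs
        calc L.op (L.op B x) (L.csum n (fun j => p j.castSucc) fun j => a j.castSucc)
            = L.op (L.op B (L.csum n (fun j => p j.castSucc) fun j => a j.castSucc)) x := by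
              ac_rfl
          _ = L.op B x := by rw [hIH]
      · have hmem : p (Fin.last (n + 1)) ∈ Set.Ioo (0:ℝ) 1 :=
          ⟨lt_of_le_of_ne (hp _) (Ne.symm h0), lt_of_le_of_ne hlast_le h1⟩
        have hq : 1 - p (Fin.last (n + 1)) ∈ Set.Ioo (0:ℝ) 1 :=
          ConvexSemilattice.one_sub_mem hmem
        have hqpos : (0:ℝ) < 1 - p (Fin.last (n + 1)) := hq.1
        have hs : ∑ j : Fin (n + 1), p j.castSucc / (1 - p (Fin.last (n + 1))) = 1 := by
          rw [← Finset.sum_div]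
          rw [div_eq_one_iff_eq (ne_of_gt hqpos)]
          linarith
        have hIH := ih (fun j => p j.castSucc / (1 - p (Fin.last (n + 1))))
          (fun j => a j.castSucc)
          (fun i => div_nonneg (hp i.castSucc) (le_of_lt hqpos)) hs
        exact L.absorb2 _ B _ x hq hIH
end

section
/- In any convex semilattice with a bottom element ⋆ satisfying the axiom x +_p ⋆ = x for all p ∈ (0,1), the probabilistic structure collapses: x +_p y = x +_q y for all p, q ∈ (0,1) and all elements x, y. -/
theorem pc_scale {A : Type*} (L : ConvexSemilattice A) (star : A)
    (hstar : ∀ p ∈ Set.Ioo (0:ℝ) 1, ∀ x, L.pc p x star = x)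
    (p a : ℝ) (hp : p ∈ Set.Ioo (0:ℝ) 1) (ha : a ∈ Set.Ioo (0:ℝ) 1)
    (x y : A) : L.pc p x y = L.pc (p * a) x y := by
  obtain ⟨hp0, hp1⟩ := hp
  obtain ⟨ha0, ha1⟩ := ha
  have hstarL : ∀ r ∈ Set.Ioo (0:ℝ) 1, ∀ z, L.pc r star z = z := by
    intro r hr z
    rw [L.pc_comm r star z hr]
    exact hstar (1 - r) ⟨by linarith [hr.2], by linarith [hr.1]⟩ z
  have hpa : p * a < 1 := by nlinarith
  have hw : p * (1 - a) / (1 - p * a) ∈ Set.Ioo (0:ℝ) 1 := by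
    constructor
    · exact div_pos (by nlinarith) (by linarith)
    · rw [div_lt_one (by linarith)]; nlinarith
  calc L.pc p x y = L.pc p (L.pc a x star) y := by rw [hstar a ⟨ha0, ha1⟩ x]
    _ = L.pc (p * a) x (L.pc (p * (1 - a) / (1 - p * a)) star y) :=
        L.pc_assoc p a x star y ⟨hp0, hp1⟩ ⟨ha0, ha1⟩
    _ = L.pc (p * a) x y := by rw [hstarL _ hw y]

/-- In a convex semilattice with an element `⋆` satisfying `x +_p ⋆ = x` for all
`p ∈ (0,1)`, the probabilistic structure collapses: `x +_p y = x +_q y`. -/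
theorem convexSemilattice_bot_collapse
    {A : Type*} (L : ConvexSemilattice A) (star : A)
    (hstar : ∀ p ∈ Set.Ioo (0:ℝ) 1, ∀ x, L.pc p x star = x)
    (p q : ℝ) (hp : p ∈ Set.Ioo (0:ℝ) 1) (hq : q ∈ Set.Ioo (0:ℝ) 1)
    (x y : A) :
    L.pc p x y = L.pc q x y := by
  have h1 := pc_scale L star hstar p (q / 2) hp
    ⟨by linarith [hq.1], by linarith [hq.2]⟩ x y
  have h2 := pc_scale L star hstar q (p / 2) hq
    ⟨by linarith [hp.1], by linarith [hp.2]⟩ x y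
  rw [h1, h2]
  ring_nf
end

section
/- Let 𝓘 = {[x,y] : 0 ≤ x ≤ y ≤ 1} be the set of closed subintervals of [0,1]. Define [x₁,y₁] ⊕ [x₂,y₂] = [min(x₁,x₂), max(y₁,y₂)] and [x₁,y₁] +_p [x₂,y₂] = [p·x₁+(1−p)·x₂, p·y₁+(1−p)·y₂]. Then (𝓘, ⊕, (+_p)) is a convex semilattice. -/
/-- `op` and `pc` form a convex semilattice structure on the subset `S`. -/
structure IsConvexSemilatticeOn {A : Type*} (S : Set A)
    (op : A → A → A) (pc : ℝ → A → A → A) : Prop where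
  mem_op : ∀ x ∈ S, ∀ y ∈ S, op x y ∈ S
  mem_pc : ∀ p ∈ Set.Ioo (0:ℝ) 1, ∀ x ∈ S, ∀ y ∈ S, pc p x y ∈ S
  op_assoc : ∀ x ∈ S, ∀ y ∈ S, ∀ z ∈ S, op (op x y) z = op x (op y z)
  op_comm : ∀ x ∈ S, ∀ y ∈ S, op x y = op y x
  op_idem : ∀ x ∈ S, op x x = x
  pc_assoc : ∀ p ∈ Set.Ioo (0:ℝ) 1, ∀ q ∈ Set.Ioo (0:ℝ) 1,
      ∀ x ∈ S, ∀ y ∈ S, ∀ z ∈ S,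
      pc p (pc q x y) z = pc (p * q) x (pc (p * (1 - q) / (1 - p * q)) y z)
  pc_comm : ∀ p ∈ Set.Ioo (0:ℝ) 1, ∀ x ∈ S, ∀ y ∈ S, pc p x y = pc (1 - p) y x
  pc_idem : ∀ p ∈ Set.Ioo (0:ℝ) 1, ∀ x ∈ S, pc p x x = x
  distrib : ∀ p ∈ Set.Ioo (0:ℝ) 1, ∀ x ∈ S, ∀ y ∈ S, ∀ z ∈ S,
      pc p (op x y) z = op (pc p x z) (pc p y z)

/-- The set `𝓘` of closed subintervals of `[0,1]`, represented as pairs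
`(x, y)` with `0 ≤ x ≤ y ≤ 1`. -/
def intervalSet : Set (ℝ × ℝ) := {q | 0 ≤ q.1 ∧ q.1 ≤ q.2 ∧ q.2 ≤ 1}

/-- `(𝓘, ⊕, (+_p))` with `[x₁,y₁] ⊕ [x₂,y₂] = [min(x₁,x₂), max(y₁,y₂)]` and
`[x₁,y₁] +_p [x₂,y₂] = [p·x₁+(1-p)·x₂, p·y₁+(1-p)·y₂]` is a convex
semilattice. -/
theorem interval_convexSemilattice :
    IsConvexSemilatticeOn intervalSet
      (fun s t => (min s.1 t.1, max s.2 t.2))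
      (fun p s t => (p * s.1 + (1 - p) * t.1, p * s.2 + (1 - p) * t.2)) := by
  constructor
  · rintro x ⟨hx1, hx2, hx3⟩ y ⟨hy1, hy2, hy3⟩
    exact ⟨le_min hx1 hy1, le_trans (min_le_left _ _) (le_trans hx2 (le_max_left _ _)),
      max_le hx3 hy3⟩
  · rintro p ⟨hp0, hp1⟩ x ⟨hx1, hx2, hx3⟩ y ⟨hy1, hy2, hy3⟩
    refine ⟨?_, ?_, ?_⟩ <;> dsimp only <;> nlinarith
  · intro x _ y _ z _
    simp [min_assoc, max_assoc]
  · intro x _ y _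
    simp [min_comm, max_comm]
  · intro x hx
    simp
  · rintro p ⟨hp0, hp1⟩ q ⟨hq0, hq1⟩ x _ y _ z _
    have h : 1 - p * q ≠ 0 := by nlinarith
    refine Prod.ext ?_ ?_ <;> simp only [] <;> field_simp <;> ring
  · rintro p hp x _ y _
    refine Prod.ext ?_ ?_ <;> simp <;> ring
  · rintro p hp x _
    refine Prod.ext ?_ ?_ <;> simp <;> ring
  · rintro p ⟨hp0, hp1⟩ x _ y _ z _
    have h1 : (0:ℝ) ≤ p := hp0.le
    refine Prod.ext ?_ ?_ <;> simp only []
    · rw [mul_min_of_nonneg _ _ h1, min_add_add_right]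
    · rw [mul_max_of_nonneg _ _ h1, max_add_add_right]
end

section
/- For convex subsets S₁, S₂ of distributions (or of any real convex space), the following distributivity holds between convex union and Minkowski combination: p·(convHull(S₁ ∪ S₂)) + (1−p)·S₃ = convHull((p·S₁ + (1−p)·S₃) ∪ (p·S₂ + (1−p)·S₃)), for all convex sets S₁, S₂, S₃ and p ∈ [0,1]. -/
open Pointwise


/-- The Minkowski `p`-combination of two sets. -/
def minkComb {E : Type*} [AddCommGroup E] [Module ℝ E]
    (p : ℝ) (X Y : Set E) : Set E :=
  {z | ∃ x ∈ X, ∃ y ∈ Y, z = p • x + (1 - p) • y}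

lemma minkComb_convex {E : Type*} [AddCommGroup E] [Module ℝ E]
    (p : ℝ) {X Y : Set E} (hX : Convex ℝ X) (hY : Convex ℝ Y) :
    Convex ℝ (minkComb p X Y) := by
  have h : minkComb p X Y = p • X + (1 - p) • Y := by
    ext z
    simp only [minkComb, Set.mem_setOf_eq, Set.mem_add, Set.mem_smul_set]
    constructor
    · rintro ⟨x, hx, y, hy, rfl⟩
      exact ⟨_, ⟨x, hx, rfl⟩, _, ⟨y, hy, rfl⟩, rfl⟩
    · rintro ⟨_, ⟨x, hx, rfl⟩, _, ⟨y, hy, rfl⟩, rfl⟩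
      exact ⟨x, hx, y, hy, rfl⟩
  rw [h]
  exact (hX.smul p).add (hY.smul (1 - p))

lemma minkComb_empty_left {E : Type*} [AddCommGroup E] [Module ℝ E]
    (p : ℝ) (Y : Set E) : minkComb p ∅ Y = ∅ := by
  ext z; simp [minkComb]

lemma minkComb_empty_right {E : Type*} [AddCommGroup E] [Module ℝ E]
    (p : ℝ) (X : Set E) : minkComb p X ∅ = ∅ := by
  ext z; simp [minkComb]

/-- Distributivity of convex union over Minkowski combination:
`(S₁ ⊕ S₂) +_p S₃ = (S₁ +_p S₃) ⊕ (S₂ +_p S₃)`, where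
`S ⊕ T = convHull(S ∪ T)` and `+_p` is the Minkowski combination. -/
theorem minkComb_convexHull_union_distrib
    {E : Type*} [AddCommGroup E] [Module ℝ E]
    (S₁ S₂ S₃ : Set E) (h₁ : Convex ℝ S₁) (h₂ : Convex ℝ S₂) (h₃ : Convex ℝ S₃)
    (p : ℝ) (hp : p ∈ Set.Icc (0:ℝ) 1) :
    minkComb p (convexHull ℝ (S₁ ∪ S₂)) S₃ =
      convexHull ℝ (minkComb p S₁ S₃ ∪ minkComb p S₂ S₃) := by
  rcases S₃.eq_empty_or_nonempty with rfl | h₃n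
  · simp [minkComb_empty_right]
  rcases S₁.eq_empty_or_nonempty with rfl | h₁n
  · rw [Set.empty_union, h₂.convexHull_eq, minkComb_empty_left p S₃, Set.empty_union,
      (minkComb_convex p h₂ h₃).convexHull_eq]
  rcases S₂.eq_empty_or_nonempty with rfl | h₂n
  · rw [Set.union_empty, h₁.convexHull_eq, minkComb_empty_left p S₃, Set.union_empty,
      (minkComb_convex p h₁ h₃).convexHull_eq]
  have hm₁ : (minkComb p S₁ S₃).Nonempty := by
    obtain ⟨x, hx⟩ := h₁n; obtain ⟨y, hy⟩ := h₃n
    exact ⟨_, x, hx, y, hy, rfl⟩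
  have hm₂ : (minkComb p S₂ S₃).Nonempty := by
    obtain ⟨x, hx⟩ := h₂n; obtain ⟨y, hy⟩ := h₃n
    exact ⟨_, x, hx, y, hy, rfl⟩
  rw [h₁.convexHull_union h₂ h₁n h₂n,
    (minkComb_convex p h₁ h₃).convexHull_union (minkComb_convex p h₂ h₃) hm₁ hm₂]
  ext z
  simp only [minkComb, Set.mem_setOf_eq, mem_convexJoin, segment,
    Set.mem_setOf_eq]
  constructor
  · rintro ⟨x, hx, y, hy, rfl⟩
    obtain ⟨x₁, hx₁, x₂, hx₂, a, b, ha, hb, hab, rfl⟩ := hx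
    refine ⟨p • x₁ + (1 - p) • y, ⟨x₁, hx₁, y, hy, rfl⟩,
      p • x₂ + (1 - p) • y, ⟨x₂, hx₂, y, hy, rfl⟩, a, b, ha, hb, hab, ?_⟩
    linear_combination (norm := module) hab • ((1 - p) • y)
  · rintro ⟨z₁, ⟨x₁, hx₁, y₁, hy₁, rfl⟩, z₂, ⟨x₂, hx₂, y₂, hy₂, rfl⟩,
      a, b, ha, hb, hab, rfl⟩
    refine ⟨a • x₁ + b • x₂, ?_, a • y₁ + b • y₂, h₃ hy₁ hy₂ ha hb hab, ?_⟩
    · exact ⟨x₁, hx₁, x₂, hx₂, a, b, ha, hb, hab, rfl⟩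
    · module
end

section
/- The free convex semilattice with bottom generated by a one-element set is ([0,1], max, (+_p), 0): for any convex semilattice with bottom (A, ⊕, +_p, ⊥) (satisfying x ⊕ ⊥ = x) and any element a ∈ A, there is a unique homomorphism h : [0,1] → A of convex semilattices with bottom such that h(1) = a. -/
/-- A convex semilattice with bottom: semilattice `op`, convex operations
`pc p` for `p ∈ (0,1)`, and a bottom element with `x ⊕ ⊥ = x`. -/
structure ConvexSemilatticeWithBot (A : Type*) where
  op : A → A → A
  pc : ℝ → A → A → A
  bot : A
  op_assoc : ∀ x y z, op (op x y) z = op x (op y z)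
  op_comm : ∀ x y, op x y = op y x
  op_idem : ∀ x, op x x = x
  pc_assoc : ∀ p q x y z, p ∈ Set.Ioo (0:ℝ) 1 → q ∈ Set.Ioo (0:ℝ) 1 →
      pc p (pc q x y) z = pc (p * q) x (pc (p * (1 - q) / (1 - p * q)) y z)
  pc_comm : ∀ p x y, p ∈ Set.Ioo (0:ℝ) 1 → pc p x y = pc (1 - p) y x
  pc_idem : ∀ p x, p ∈ Set.Ioo (0:ℝ) 1 → pc p x x = x
  distrib : ∀ p x y z, p ∈ Set.Ioo (0:ℝ) 1 →
      pc p (op x y) z = op (pc p x z) (pc p y z)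
  bot_ax : ∀ x, op x bot = x

/-- The semilattice operation `max` on `[0,1]`. -/
noncomputable def uiMax (x y : unitInterval) : unitInterval :=
  ⟨max x.1 y.1, le_max_of_le_left x.2.1, max_le x.2.2 y.2.2⟩

/-- The convex combination `x +_p y = p·x + (1-p)·y` on `[0,1]`. -/
noncomputable def uiPc (p : ℝ) (x y : unitInterval) : unitInterval :=
  if h : p ∈ Set.Icc (0:ℝ) 1 then
    ⟨p * x.1 + (1 - p) * y.1, by
      constructor
      · have := x.2.1; have := y.2.1; have := h.1; have := h.2; nlinarith
      · have := x.2.2; have := y.2.2; have h1 := h.1; have h2 := h.2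
        have := x.2.1; have := y.2.1; nlinarith⟩
  else x

namespace CSLaux
variable {A : Type*} (L : ConvexSemilatticeWithBot A) (a : A)

noncomputable def ext (t : ℝ) : A :=
  if t = 0 then L.bot else if t = 1 then a else L.pc t a L.bot

lemma ext_zero : ext L a 0 = L.bot := by simp [ext]
lemma ext_one : ext L a 1 = a := by simp [ext]
lemma ext_mem {t : ℝ} (ht : t ∈ Set.Ioo (0:ℝ) 1) : ext L a t = L.pc t a L.bot := by
  simp [ext, ne_of_gt ht.1, ne_of_lt ht.2]

lemma mem_symm {p : ℝ} (hp : p ∈ Set.Ioo (0:ℝ) 1) : (1 - p) ∈ Set.Ioo (0:ℝ) 1 :=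
  ⟨by linarith [hp.2], by linarith [hp.1]⟩

lemma rdistrib {p : ℝ} (hp : p ∈ Set.Ioo (0:ℝ) 1) (x y z : A) :
    L.pc p z (L.op x y) = L.op (L.pc p z x) (L.pc p z y) := by
  rw [L.pc_comm p z (L.op x y) hp, L.distrib _ _ _ _ (mem_symm hp),
    ← L.pc_comm p z x hp, ← L.pc_comm p z y hp]

lemma absorb {q : ℝ} (hq : q ∈ Set.Ioo (0:ℝ) 1) :
    L.op a (L.pc q a L.bot) = a := by
  nth_rewrite 1 [← L.pc_idem q a hq]
  rw [← rdistrib L hq, L.bot_ax, L.pc_idem q a hq]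

lemma comb {α β : ℝ} (hα : α ∈ Set.Ioo (0:ℝ) 1) (hβ : β ∈ Set.Ioo (0:ℝ) 1) :
    L.pc α a (L.pc β a L.bot) = L.pc (α + (1 - α) * β) a L.bot := by
  obtain ⟨hα0, hα1⟩ := hα; obtain ⟨hβ0, hβ1⟩ := hβ
  set γ := α + (1 - α) * β with hγdef
  have hγ : γ ∈ Set.Ioo (0:ℝ) 1 := ⟨by nlinarith, by nlinarith⟩
  have hγ0 : γ ≠ 0 := ne_of_gt hγ.1
  have hq : α / γ ∈ Set.Ioo (0:ℝ) 1 := by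
    constructor
    · exact div_pos hα0 hγ.1
    · rw [div_lt_one hγ.1]; nlinarith
  have h := L.pc_assoc γ (α / γ) a a L.bot hγ hq
  rw [L.pc_idem _ _ hq] at h
  have e1 : γ * (α / γ) = α := by field_simp
  have hα' : (1 : ℝ) - α ≠ 0 := by intro hc; nlinarith
  have e2 : γ * (1 - α / γ) / (1 - α) = β := by
    have h3 : γ * (1 - α / γ) = (1 - α) * β := by field_simp; ring
    rw [h3, mul_comm, mul_div_assoc, div_self hα', mul_one]
  rw [e1, e2] at h
  exact h.symm

lemma pc_bots {r : ℝ} (hr : r ∈ Set.Ioo (0:ℝ) 1) : L.pc r L.bot L.bot = L.bot :=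
  L.pc_idem r L.bot hr

lemma scale {u q : ℝ} (hu : u ∈ Set.Ioo (0:ℝ) 1) (hq : q ∈ Set.Ioo (0:ℝ) 1) :
    L.pc u (L.pc q a L.bot) L.bot = L.pc (u * q) a L.bot := by
  rw [L.pc_assoc u q a L.bot L.bot hu hq, pc_bots]
  obtain ⟨hu0, hu1⟩ := hu; obtain ⟨hq0, hq1⟩ := hq
  have h1 : (0:ℝ) < 1 - u * q := by nlinarith
  constructor
  · exact div_pos (by nlinarith) h1
  · rw [div_lt_one h1]; nlinarith

lemma ext_absorb {u v : ℝ} (hu : u ∈ Set.Icc (0:ℝ) 1) (hv : v ∈ Set.Icc (0:ℝ) 1)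
    (hvu : v ≤ u) : L.op (ext L a u) (ext L a v) = ext L a u := by
  by_cases hv0 : v = 0
  · subst hv0; rw [ext_zero, L.bot_ax]
  by_cases huv : u = v
  · subst huv; exact L.op_idem _
  have hvlt : v < u := lt_of_le_of_ne hvu (fun h => huv h.symm)
  have hvI : v ∈ Set.Ioo (0:ℝ) 1 :=
    ⟨lt_of_le_of_ne hv.1 (Ne.symm hv0), lt_of_lt_of_le hvlt hu.2⟩
  by_cases hu1 : u = 1
  · subst hu1; rw [ext_one, ext_mem L a hvI, absorb L a hvI]
  have huI : u ∈ Set.Ioo (0:ℝ) 1 :=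
    ⟨lt_trans hvI.1 hvlt, lt_of_le_of_ne hu.2 hu1⟩
  rw [ext_mem L a huI, ext_mem L a hvI]
  have hq : v / u ∈ Set.Ioo (0:ℝ) 1 := by
    constructor
    · exact div_pos hvI.1 huI.1
    · rw [div_lt_one huI.1]; exact hvlt
  have hne : u ≠ 0 := ne_of_gt huI.1
  have hrw : L.pc v a L.bot = L.pc u (L.pc (v / u) a L.bot) L.bot := by
    rw [scale L a huI hq]
    congr 1
    field_simp
  rw [hrw, ← L.distrib u a (L.pc (v / u) a L.bot) L.bot huI, absorb L a hq]

lemma ext_max {u v : ℝ} (hu : u ∈ Set.Icc (0:ℝ) 1) (hv : v ∈ Set.Icc (0:ℝ) 1) :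
    ext L a (max u v) = L.op (ext L a u) (ext L a v) := by
  rcases le_total v u with h | h
  · rw [max_eq_left h, ext_absorb L a hu hv h]
  · rw [max_eq_right h, L.op_comm, ext_absorb L a hv hu h]

lemma ext_affine {p u v : ℝ} (hp : p ∈ Set.Ioo (0:ℝ) 1)
    (hu : u ∈ Set.Icc (0:ℝ) 1) (hv : v ∈ Set.Icc (0:ℝ) 1) :
    ext L a (p * u + (1 - p) * v) = L.pc p (ext L a u) (ext L a v) := by
  obtain ⟨hp0, hp1⟩ := hp
  have hpI : p ∈ Set.Ioo (0:ℝ) 1 := ⟨hp0, hp1⟩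
  have hpI' : (1 - p) ∈ Set.Ioo (0:ℝ) 1 := mem_symm hpI
  rcases eq_or_lt_of_le hu.1 with hu0 | hu0
  · -- u = 0
    rcases eq_or_lt_of_le hv.1 with hv0 | hv0
    · rw [← hu0, ← hv0]
      simpa [ext_zero] using (L.pc_idem p L.bot hpI).symm
    rcases eq_or_lt_of_le hv.2 with hv1 | hv1
    · rw [← hu0, hv1]
      have h1 : p * 0 + (1 - p) * 1 = 1 - p := by ring
      rw [h1, ext_mem L a hpI', ext_zero, ext_one, L.pc_comm p L.bot a hpI]
    · have hvI : v ∈ Set.Ioo (0:ℝ) 1 := ⟨hv0, hv1⟩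
      rw [← hu0, ext_zero, ext_mem L a hvI]
      have h1 : p * 0 + (1 - p) * v = (1 - p) * v := by ring
      have hw : (1 - p) * v ∈ Set.Ioo (0:ℝ) 1 :=
        ⟨mul_pos (by linarith) hv0, by nlinarith⟩
      rw [h1, ext_mem L a hw, L.pc_comm p L.bot (L.pc v a L.bot) hpI,
        scale L a hpI' hvI]
  rcases eq_or_lt_of_le hu.2 with hu1 | hu1
  · -- u = 1
    rcases eq_or_lt_of_le hv.1 with hv0 | hv0
    · rw [hu1, ← hv0, ext_one, ext_zero]
      have h1 : p * 1 + (1 - p) * 0 = p := by ring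
      rw [h1, ext_mem L a hpI]
    rcases eq_or_lt_of_le hv.2 with hv1 | hv1
    · rw [hu1, hv1]
      have h1 : p * 1 + (1 - p) * 1 = 1 := by ring
      rw [h1, ext_one, L.pc_idem p a hpI]
    · have hvI : v ∈ Set.Ioo (0:ℝ) 1 := ⟨hv0, hv1⟩
      rw [hu1, ext_one, ext_mem L a hvI]
      have hw : p * 1 + (1 - p) * v ∈ Set.Ioo (0:ℝ) 1 :=
        ⟨by nlinarith, by nlinarith⟩
      rw [ext_mem L a hw, comb L a hpI hvI]
      congr 1; ring
  have huI : u ∈ Set.Ioo (0:ℝ) 1 := ⟨hu0, hu1⟩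
  rcases eq_or_lt_of_le hv.1 with hv0 | hv0
  · -- v = 0
    rw [← hv0, ext_zero, ext_mem L a huI]
    have h1 : p * u + (1 - p) * 0 = p * u := by ring
    have hw : p * u ∈ Set.Ioo (0:ℝ) 1 := ⟨mul_pos hp0 hu0, by nlinarith⟩
    rw [h1, ext_mem L a hw, scale L a hpI huI]
  rcases eq_or_lt_of_le hv.2 with hv1 | hv1
  · -- v = 1
    rw [hv1, ext_one, ext_mem L a huI]
    have hw : p * u + (1 - p) * 1 ∈ Set.Ioo (0:ℝ) 1 :=
      ⟨by nlinarith, by nlinarith⟩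
    rw [ext_mem L a hw, L.pc_comm p (L.pc u a L.bot) a hpI, comb L a hpI' huI]
    congr 1; ring
  · -- u, v ∈ Ioo
    have hvI : v ∈ Set.Ioo (0:ℝ) 1 := ⟨hv0, hv1⟩
    rw [ext_mem L a huI, ext_mem L a hvI]
    have hw : p * u + (1 - p) * v ∈ Set.Ioo (0:ℝ) 1 :=
      ⟨by nlinarith, by nlinarith⟩
    rw [ext_mem L a hw]
    have hpu : (0:ℝ) < 1 - p * u := by nlinarith
    have hr : p * (1 - u) / (1 - p * u) ∈ Set.Ioo (0:ℝ) 1 := by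
      constructor
      · exact div_pos (by nlinarith) hpu
      · rw [div_lt_one hpu]; nlinarith
    rw [L.pc_assoc p u a L.bot (L.pc v a L.bot) hpI huI,
      L.pc_comm _ L.bot (L.pc v a L.bot) hr]
    have hr' : 1 - p * (1 - u) / (1 - p * u) = (1 - p) / (1 - p * u) := by
      field_simp
      ring
    rw [hr']
    have hs : (1 - p) / (1 - p * u) ∈ Set.Ioo (0:ℝ) 1 := by
      constructor
      · exact div_pos (by linarith) hpu
      · rw [div_lt_one hpu]; nlinarith
    rw [scale L a hs hvI]
    have hpuI : p * u ∈ Set.Ioo (0:ℝ) 1 := ⟨mul_pos hp0 hu0, by nlinarith⟩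
    have ht : (1 - p) / (1 - p * u) * v ∈ Set.Ioo (0:ℝ) 1 := by
      constructor
      · exact mul_pos hs.1 hv0
      · rw [div_mul_eq_mul_div, div_lt_one hpu]; nlinarith
    rw [comb L a hpuI ht]
    congr 1
    field_simp

end CSLaux

/-- `([0,1], max, (+_p), 0)` is the free convex semilattice with bottom
generated by a single generator (the element `1`): for every convex
semilattice with bottom `A` and every `a ∈ A`, there is a unique homomorphism
`h : [0,1] → A` with `h 1 = a`. -/
theorem free_convexSemilatticeWithBot
    {A : Type*} (L : ConvexSemilatticeWithBot A) (a : A) :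
    ∃! h : unitInterval → A,
      (∀ x y, h (uiMax x y) = L.op (h x) (h y)) ∧
      (∀ p ∈ Set.Ioo (0:ℝ) 1, ∀ x y, h (uiPc p x y) = L.pc p (h x) (h y)) ∧
      h 0 = L.bot ∧ h 1 = a := by
  refine ⟨fun x => CSLaux.ext L a x.1, ⟨?_, ?_, ?_, ?_⟩, ?_⟩
  · intro x y
    exact CSLaux.ext_max L a x.2 y.2
  · intro p hp x y
    have hd : p ∈ Set.Icc (0:ℝ) 1 := ⟨hp.1.le, hp.2.le⟩
    have hv : (uiPc p x y).1 = p * x.1 + (1 - p) * y.1 := by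
      simp [uiPc, hd]
    show CSLaux.ext L a (uiPc p x y).1 = _
    rw [hv]
    exact CSLaux.ext_affine L a hp x.2 y.2
  · show CSLaux.ext L a ((0 : unitInterval) : ℝ) = L.bot
    rw [show ((0 : unitInterval) : ℝ) = 0 from rfl, CSLaux.ext_zero]
  · show CSLaux.ext L a ((1 : unitInterval) : ℝ) = a
    rw [show ((1 : unitInterval) : ℝ) = 1 from rfl, CSLaux.ext_one]
  · rintro g ⟨hmax, hpc, h0, h1⟩
    funext x
    rcases eq_or_lt_of_le x.2.1 with hx0 | hx0
    · have hx : x = 0 := Subtype.ext hx0.symm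
      rw [hx, h0]
      rw [show ((0 : unitInterval) : ℝ) = 0 from rfl, CSLaux.ext_zero]
    rcases eq_or_lt_of_le x.2.2 with hx1 | hx1
    · have hx : x = 1 := Subtype.ext hx1
      rw [hx, h1]
      rw [show ((1 : unitInterval) : ℝ) = 1 from rfl, CSLaux.ext_one]
    · have hxI : (x : ℝ) ∈ Set.Ioo (0:ℝ) 1 := ⟨hx0, hx1⟩
      have key : uiPc x.1 1 0 = x := by
        apply Subtype.ext
        have hd : (x : ℝ) ∈ Set.Icc (0:ℝ) 1 := ⟨hx0.le, hx1.le⟩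
        simp [uiPc, hd]
      rw [CSLaux.ext_mem L a hxI, ← h1, ← h0, ← hpc x.1 hxI 1 0, key]
end

section
/- The free convex semilattice with top generated by a one-element set is ([0,1], min, (+_p), 0): for any convex semilattice with top (A, ⊕, +_p, ⊤) (satisfying x ⊕ ⊤ = ⊤) and any element a ∈ A, there is a unique homomorphism h : [0,1] → A of convex semilattices with top such that h(1) = a (with h(0) = ⊤). -/
/-- A convex semilattice with top: semilattice `op`, convex operations
`pc p` for `p ∈ (0,1)`, and a top element with `x ⊕ ⊤ = ⊤`. -/
structure ConvexSemilatticeWithTop (A : Type*) where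
  op : A → A → A
  pc : ℝ → A → A → A
  top : A
  op_assoc : ∀ x y z, op (op x y) z = op x (op y z)
  op_comm : ∀ x y, op x y = op y x
  op_idem : ∀ x, op x x = x
  pc_assoc : ∀ p q x y z, p ∈ Set.Ioo (0:ℝ) 1 → q ∈ Set.Ioo (0:ℝ) 1 →
      pc p (pc q x y) z = pc (p * q) x (pc (p * (1 - q) / (1 - p * q)) y z)
  pc_comm : ∀ p x y, p ∈ Set.Ioo (0:ℝ) 1 → pc p x y = pc (1 - p) y x
  pc_idem : ∀ p x, p ∈ Set.Ioo (0:ℝ) 1 → pc p x x = x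
  distrib : ∀ p x y z, p ∈ Set.Ioo (0:ℝ) 1 →
      pc p (op x y) z = op (pc p x z) (pc p y z)
  top_ax : ∀ x, op x top = top

/-- The semilattice operation `min` on `[0,1]`. -/
noncomputable def uiMin (x y : unitInterval) : unitInterval :=
  ⟨min x.1 y.1, le_min x.2.1 y.2.1, min_le_of_left_le x.2.2⟩

namespace FreeCSLAux

variable {A : Type*} (L : ConvexSemilatticeWithTop A) (a : A)

/-- The candidate homomorphism on the reals. -/
noncomputable def Fh (t : ℝ) : A :=
  if t = 0 then L.top else if t = 1 then a else L.pc t a L.top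

lemma Fh_zero : Fh L a 0 = L.top := by simp [Fh]
lemma Fh_one : Fh L a 1 = a := by simp [Fh]
lemma Fh_mid {t : ℝ} (h0 : t ≠ 0) (h1 : t ≠ 1) : Fh L a t = L.pc t a L.top := by
  simp [Fh, h0, h1]

lemma one_sub_mem {p : ℝ} (hp : p ∈ Set.Ioo (0:ℝ) 1) : 1 - p ∈ Set.Ioo (0:ℝ) 1 :=
  ⟨by linarith [hp.2], by linarith [hp.1]⟩

lemma pc_comm' {p : ℝ} (hp : p ∈ Set.Ioo (0:ℝ) 1) (x y : A) :
    L.pc (1 - p) x y = L.pc p y x := (L.pc_comm p y x hp).symm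

lemma distrib2 {p : ℝ} (hp : p ∈ Set.Ioo (0:ℝ) 1) (x y z : A) :
    L.pc p x (L.op y z) = L.op (L.pc p x y) (L.pc p x z) := by
  rw [L.pc_comm p x _ hp, L.distrib _ _ _ _ (one_sub_mem hp),
    pc_comm' L hp, pc_comm' L hp]

lemma absorb {r : ℝ} (hr : r ∈ Set.Ioo (0:ℝ) 1) (x : A) :
    L.op (L.pc r x L.top) x = L.pc r x L.top := by
  have h := distrib2 L hr x L.top x
  rw [L.pc_idem r x hr] at h
  rw [← h, L.op_comm, L.top_ax]

lemma skew {q t : ℝ} (hq : q ∈ Set.Ioo (0:ℝ) 1) (ht : t ∈ Set.Ioo (0:ℝ) 1)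
    (x z : A) : L.pc q x (L.pc t x z) = L.pc (q + t - q * t) x z := by
  have hq' := one_sub_mem hq
  have ht' := one_sub_mem ht
  have hd : (0:ℝ) < 1 - (1 - q) * (1 - t) := by nlinarith [hq.1, hq.2, ht.1, ht.2]
  have hprod : (1 - q) * (1 - t) ∈ Set.Ioo (0:ℝ) 1 :=
    ⟨mul_pos hq'.1 ht'.1, by linarith⟩
  have hw : (1 - q) * (1 - (1 - t)) / (1 - (1 - q) * (1 - t)) ∈ Set.Ioo (0:ℝ) 1 := by
    constructor
    · exact div_pos (by nlinarith [hq'.1, ht.1]) hd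
    · rw [div_lt_one hd]; nlinarith [hq.1, ht.2]
  calc L.pc q x (L.pc t x z)
      = L.pc q x (L.pc (1 - t) z x) := by rw [L.pc_comm t x z ht]
    _ = L.pc (1 - q) (L.pc (1 - t) z x) x := L.pc_comm q x _ hq
    _ = L.pc ((1 - q) * (1 - t)) z
          (L.pc ((1 - q) * (1 - (1 - t)) / (1 - (1 - q) * (1 - t))) x x) :=
        L.pc_assoc (1 - q) (1 - t) z x x hq' ht'
    _ = L.pc ((1 - q) * (1 - t)) z x := by rw [L.pc_idem _ x hw]
    _ = L.pc (1 - (1 - q) * (1 - t)) x z := L.pc_comm _ z x hprod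
    _ = L.pc (q + t - q * t) x z := by ring_nf

lemma F_scale {p t : ℝ} (hp : p ∈ Set.Ioo (0:ℝ) 1) (ht0 : 0 < t) (ht1 : t ≤ 1) :
    Fh L a (p * t) = L.pc p (Fh L a t) L.top := by
  have hpt : p * t ∈ Set.Ioo (0:ℝ) 1 :=
    ⟨mul_pos hp.1 ht0, by nlinarith [hp.2]⟩
  rw [Fh_mid L a (ne_of_gt hpt.1) (ne_of_lt hpt.2)]
  rcases eq_or_lt_of_le ht1 with h1 | h1
  · rw [h1, Fh_one, mul_one]
  · rw [Fh_mid L a (ne_of_gt ht0) (ne_of_lt h1)]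
    have ht : t ∈ Set.Ioo (0:ℝ) 1 := ⟨ht0, h1⟩
    have hd : (0:ℝ) < 1 - p * t := by linarith [hpt.2]
    have hr : p * (1 - t) / (1 - p * t) ∈ Set.Ioo (0:ℝ) 1 := by
      constructor
      · exact div_pos (by nlinarith [hp.1, ht.2]) hd
      · rw [div_lt_one hd]; nlinarith [hp.2, ht0]
    rw [L.pc_assoc p t a L.top L.top hp ht, L.pc_idem _ _ hr]

lemma F_min {s t : ℝ} (hs : 0 < s) (hst : s ≤ t) (ht : t ≤ 1) :
    L.op (Fh L a s) (Fh L a t) = Fh L a s := by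
  rcases eq_or_lt_of_le hst with h | h
  · rw [h, L.op_idem]
  · have ht0 : 0 < t := lt_trans hs h
    have hr : s / t ∈ Set.Ioo (0:ℝ) 1 :=
      ⟨div_pos hs ht0, (div_lt_one ht0).2 h⟩
    have hs' : Fh L a s = L.pc (s / t) (Fh L a t) L.top := by
      rw [← F_scale L a hr ht0 ht]
      congr 1
      field_simp
    rw [hs', absorb L hr]

lemma F_pc {p x y : ℝ} (hp : p ∈ Set.Ioo (0:ℝ) 1) (hx : x ∈ Set.Icc (0:ℝ) 1)
    (hy : y ∈ Set.Icc (0:ℝ) 1) :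
    Fh L a (p * x + (1 - p) * y) = L.pc p (Fh L a x) (Fh L a y) := by
  rcases eq_or_lt_of_le hx.1 with hx0 | hx0
  · -- x = 0
    rcases eq_or_lt_of_le hy.1 with hy0 | hy0
    · rw [← hx0, ← hy0]
      simp only [mul_zero, add_zero]
      rw [Fh_zero, L.pc_idem p _ hp]
    · rw [← hx0, Fh_zero, mul_zero, zero_add,
        F_scale L a (one_sub_mem hp) hy0 hy.2, pc_comm' L hp]
  · rcases eq_or_lt_of_le hy.1 with hy0 | hy0
    · rw [← hy0, Fh_zero, mul_zero, add_zero, F_scale L a hp hx0 hx.2]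
    · -- x > 0, y > 0
      by_cases hx1 : x = 1
      · subst hx1
        by_cases hy1 : y = 1
        · subst hy1
          rw [show p * 1 + (1 - p) * 1 = (1:ℝ) by ring, Fh_one, L.pc_idem p _ hp]
        · have hy' : y ∈ Set.Ioo (0:ℝ) 1 := ⟨hy0, lt_of_le_of_ne hy.2 hy1⟩
          have hs : p * 1 + (1 - p) * y ∈ Set.Ioo (0:ℝ) 1 := by
            constructor
            · nlinarith [hp.1, hp.2]
            · nlinarith [hp.2, hy'.2, hp.1]
          rw [Fh_mid L a (ne_of_gt hs.1) (ne_of_lt hs.2), Fh_one,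
            Fh_mid L a (ne_of_gt hy0) hy1, skew L hp hy' a L.top]
          ring_nf
      · have hx' : x ∈ Set.Ioo (0:ℝ) 1 := ⟨hx0, lt_of_le_of_ne hx.2 hx1⟩
        have hd : (0:ℝ) < 1 - p * x := by nlinarith [hp.2, hx'.2, hp.1]
        have hpx : p * x ∈ Set.Ioo (0:ℝ) 1 := ⟨mul_pos hp.1 hx0, by linarith⟩
        have hr : p * (1 - x) / (1 - p * x) ∈ Set.Ioo (0:ℝ) 1 := by
          constructor
          · exact div_pos (by nlinarith [hp.1, hx'.2]) hd
          · rw [div_lt_one hd]; nlinarith [hp.2, hx0]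
        have h1r : 1 - p * (1 - x) / (1 - p * x) = (1 - p) / (1 - p * x) := by
          field_simp
          ring
        have hq2 : (1 - p) / (1 - p * x) ∈ Set.Ioo (0:ℝ) 1 := by
          constructor
          · exact div_pos (by linarith [hp.2]) hd
          · rw [div_lt_one hd]; nlinarith [hp.1, hx'.2]
        have ht : (1 - p) / (1 - p * x) * y ∈ Set.Ioo (0:ℝ) 1 := by
          constructor
          · exact mul_pos hq2.1 hy0
          · calc (1 - p) / (1 - p * x) * y ≤ (1 - p) / (1 - p * x) * 1 :=
                mul_le_mul_of_nonneg_left hy.2 (le_of_lt hq2.1)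
            _ < 1 := by rw [mul_one]; exact hq2.2
        have hs : p * x + (1 - p) * y ∈ Set.Ioo (0:ℝ) 1 := by
          constructor
          · nlinarith [hp.1, hp.2, hy0]
          · nlinarith [hp.1, hp.2, hy.2, hx'.2]
        have harg : p * x + (1 - p) * y
            = p * x + (1 - p) / (1 - p * x) * y
              - p * x * ((1 - p) / (1 - p * x) * y) := by
          field_simp
          ring
        rw [Fh_mid L a (ne_of_gt hx0) hx1,
          L.pc_assoc p x a L.top (Fh L a y) hp hx',
          L.pc_comm _ L.top (Fh L a y) hr, h1r,
          ← F_scale L a hq2 hy0 hy.2,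
          Fh_mid L a (ne_of_gt ht.1) (ne_of_lt ht.2),
          skew L hpx ht a L.top,
          Fh_mid L a (ne_of_gt hs.1) (ne_of_lt hs.2), harg]

end FreeCSLAux

open FreeCSLAux in
/-- `([0,1], min, (+_p), 0)` is the free convex semilattice with top
generated by a single generator (the element `1`): for every convex
semilattice with top `A` and every `a ∈ A`, there is a unique homomorphism
`h : [0,1] → A` with `h 1 = a` (and `h 0 = ⊤`). -/
theorem free_convexSemilatticeWithTop
    {A : Type*} (L : ConvexSemilatticeWithTop A) (a : A) :
    ∃! h : unitInterval → A,
      (∀ x y, h (uiMin x y) = L.op (h x) (h y)) ∧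
      (∀ p ∈ Set.Ioo (0:ℝ) 1, ∀ x y, h (uiPc p x y) = L.pc p (h x) (h y)) ∧
      h 0 = L.top ∧ h 1 = a := by
  refine ⟨fun x => Fh L a x.1, ⟨?_, ?_, ?_, ?_⟩, ?_⟩
  · -- min homomorphism
    intro x y
    show Fh L a (min x.1 y.1) = L.op (Fh L a x.1) (Fh L a y.1)
    rcases eq_or_lt_of_le x.2.1 with hx0 | hx0
    · have hm : min x.1 y.1 = x.1 :=
        min_eq_left (by rw [← hx0]; exact y.2.1)
      rw [hm, ← hx0, Fh_zero, L.op_comm, L.top_ax]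
    · rcases eq_or_lt_of_le y.2.1 with hy0 | hy0
      · have hm : min x.1 y.1 = y.1 :=
          min_eq_right (by rw [← hy0]; exact x.2.1)
        rw [hm, ← hy0, Fh_zero, L.top_ax]
      · rcases le_total x.1 y.1 with h | h
        · rw [min_eq_left h]
          exact (F_min L a hx0 h y.2.2).symm
        · rw [min_eq_right h, L.op_comm]
          exact (F_min L a hy0 h x.2.2).symm
  · -- convex homomorphism
    intro p hp x y
    have hpI : p ∈ Set.Icc (0:ℝ) 1 := ⟨le_of_lt hp.1, le_of_lt hp.2⟩
    show Fh L a (uiPc p x y).1 = L.pc p (Fh L a x.1) (Fh L a y.1)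
    have hval : (uiPc p x y).1 = p * x.1 + (1 - p) * y.1 := by
      simp [uiPc, hpI]
    rw [hval]
    exact F_pc L a hp x.2 y.2
  · show Fh L a ((0 : unitInterval) : ℝ) = L.top
    simp [Fh]
  · show Fh L a ((1 : unitInterval) : ℝ) = a
    simp [Fh]
  · -- uniqueness
    rintro g ⟨hmin, hpc, h0, h1⟩
    funext x
    show g x = Fh L a x.1
    by_cases hx0 : x.1 = 0
    · have hx : x = 0 := Subtype.ext (by simpa using hx0)
      rw [hx, h0, hx0] at *
      rw [hx, h0]
      simp [hx0, Fh]
    · by_cases hx1 : x.1 = 1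
      · have hx : x = 1 := Subtype.ext (by simpa using hx1)
        rw [hx, h1]
        simp [hx1, Fh]
      · have hxI : x.1 ∈ Set.Ioo (0:ℝ) 1 :=
          ⟨lt_of_le_of_ne x.2.1 (Ne.symm hx0), lt_of_le_of_ne x.2.2 hx1⟩
        have hkey : uiPc x.1 1 0 = x := by
          apply Subtype.ext
          have hxI' : x.1 ∈ Set.Icc (0:ℝ) 1 := x.2
          simp [uiPc, hxI']
        calc g x = g (uiPc x.1 1 0) := by rw [hkey]
          _ = L.pc x.1 (g 1) (g 0) := hpc x.1 hxI 1 0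
          _ = L.pc x.1 a L.top := by rw [h0, h1]
          _ = Fh L a x.1 := (Fh_mid L a hx0 hx1).symm
end

section
/- In a convex semilattice with top satisfying x ⊕ ⊤ = ⊤, interpreted on intervals of [0,1] with ⊕ = minmax and +_p the componentwise convex combination and ⊤ = [0,0], the upper endpoint collapses: [x, y₁] = [x, y₂] as elements of the quotient, i.e., the quotient of the interval algebra 𝓘 by the top axiom is isomorphic to ([0,1], min, +_p, 0) via [x,y] ↦ x. -/
/-- Closed subintervals `[x,y]` of `[0,1]`, as pairs with `0 ≤ x ≤ y ≤ 1`. -/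
def II : Type := {q : ℝ × ℝ // 0 ≤ q.1 ∧ q.1 ≤ q.2 ∧ q.2 ≤ 1}

/-- `[x₁,y₁] ⊕ [x₂,y₂] = [min(x₁,x₂), max(y₁,y₂)]`. -/
noncomputable def iop (s t : II) : II :=
  ⟨(min s.1.1 t.1.1, max s.1.2 t.1.2),
    le_min s.2.1 t.2.1,
    min_le_of_left_le (le_trans s.2.2.1 (le_max_left _ _)),
    max_le s.2.2.2 t.2.2.2⟩

/-- `[x₁,y₁] +_p [x₂,y₂] = [p·x₁+(1-p)·x₂, p·y₁+(1-p)·y₂]`. -/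
noncomputable def ipc (p : ℝ) (s t : II) : II :=
  if h : p ∈ Set.Icc (0:ℝ) 1 then
    ⟨(p * s.1.1 + (1 - p) * t.1.1, p * s.1.2 + (1 - p) * t.1.2), by
      obtain ⟨h0, h1⟩ := h
      refine ⟨?_, ?_, ?_⟩ <;>
        · simp only
          nlinarith [s.2.1, t.2.1, s.2.2.1, t.2.2.1, s.2.2.2, t.2.2.2]⟩
  else s

/-- The interval `[0,0]`. -/
noncomputable def izero : II := ⟨(0, 0), by norm_num⟩

/-- The smallest congruence on the interval algebra containing all instances
of the top axiom `S ⊕ [0,0] = [0,0]`. -/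
inductive TopCong : II → II → Prop
  | base (s : II) : TopCong (iop s izero) izero
  | refl (s : II) : TopCong s s
  | symm {s t : II} : TopCong s t → TopCong t s
  | trans {s t u : II} : TopCong s t → TopCong t u → TopCong s u
  | op_congr {s s' t t' : II} : TopCong s s' → TopCong t t' →
      TopCong (iop s t) (iop s' t')
  | pc_congr (p : ℝ) {s s' t t' : II} : p ∈ Set.Ioo (0:ℝ) 1 →
      TopCong s s' → TopCong t t' → TopCong (ipc p s t) (ipc p s' t')

/-!
The lower endpoint is invariant under every generator of the congruence, so congruent intervals
have the same lower endpoint. Conversely, an interval with lower endpoint `0` absorbs `[0,0]`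
and is therefore identified with `[0,0]`; and for `0 < x < 1`,
`[x,y] = [1,1] +_x [0,c]` with `c = (y - x)/(1 - x)`, which the congruence identifies with
`[1,1] +_x [0,0] = [x,x]`. Hence every interval is congruent to the point interval at its
lower endpoint.
-/

@[ext]
lemma II.ext {s t : II} (h₁ : s.1.1 = t.1.1) (h₂ : s.1.2 = t.1.2) : s = t :=
  Subtype.ext (Prod.ext h₁ h₂)

def II.point (x : ℝ) (hx : x ∈ Set.Icc (0:ℝ) 1) : II := ⟨(x, x), hx.1, le_rfl, hx.2⟩

lemma II.fst_mem_Icc (s : II) : s.1.1 ∈ Set.Icc (0:ℝ) 1 := ⟨s.2.1, s.2.2.1.trans s.2.2.2⟩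

lemma iop_fst (s t : II) : (iop s t).1.1 = min s.1.1 t.1.1 := rfl

lemma ipc_fst {p : ℝ} (hp : p ∈ Set.Icc (0:ℝ) 1) (s t : II) :
    (ipc p s t).1.1 = p * s.1.1 + (1 - p) * t.1.1 :=
  congrArg (fun u : II => u.1.1) (dif_pos hp)

lemma ipc_snd {p : ℝ} (hp : p ∈ Set.Icc (0:ℝ) 1) (s t : II) :
    (ipc p s t).1.2 = p * s.1.2 + (1 - p) * t.1.2 :=
  congrArg (fun u : II => u.1.2) (dif_pos hp)

lemma iop_izero_of_fst_eq_zero {s : II} (h : s.1.1 = 0) : iop s izero = s :=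
  II.ext (by simp [iop, izero, h]) (max_eq_left (s.2.1.trans s.2.2.1))

lemma ipc_point_one_izero {x : ℝ} (hx : x ∈ Set.Icc (0:ℝ) 1) :
    ipc x (II.point 1 (by norm_num)) izero = II.point x hx := by
  ext
  · rw [ipc_fst hx]
    simp [II.point, izero]
  · rw [ipc_snd hx]
    simp [II.point, izero]

lemma exists_eq_ipc_point_one {s : II} (hs : s.1.1 < 1) :
    ∃ t : II, t.1.1 = 0 ∧ s = ipc s.1.1 (II.point 1 (by norm_num)) t := by
  have h1x : 0 < 1 - s.1.1 := sub_pos.mpr hs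
  let t : II := ⟨(0, (s.1.2 - s.1.1) / (1 - s.1.1)), le_rfl,
    div_nonneg (sub_nonneg.mpr s.2.2.1) h1x.le, (div_le_one h1x).mpr (by linarith [s.2.2.2])⟩
  refine ⟨t, rfl, ?_⟩
  ext
  · rw [ipc_fst ⟨s.2.1, hs.le⟩]
    simp [II.point, t]
  · rw [ipc_snd ⟨s.2.1, hs.le⟩]
    simp only [II.point, t]
    field_simp
    ring

lemma TopCong.fst_eq {s t : II} (h : TopCong s t) : s.1.1 = t.1.1 := by
  induction h with
  | base s => exact min_eq_right s.2.1
  | refl s => rfl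
  | symm _ ih => exact ih.symm
  | trans _ _ ih₁ ih₂ => exact ih₁.trans ih₂
  | op_congr _ _ ih₁ ih₂ => simp only [iop_fst, ih₁, ih₂]
  | pc_congr p hp _ _ ih₁ ih₂ =>
    rw [ipc_fst (Set.Ioo_subset_Icc_self hp), ipc_fst (Set.Ioo_subset_Icc_self hp), ih₁, ih₂]

lemma topCong_izero_of_fst_eq_zero {s : II} (h : s.1.1 = 0) : TopCong s izero :=
  iop_izero_of_fst_eq_zero h ▸ TopCong.base s

lemma topCong_point_fst (s : II) : TopCong s (II.point s.1.1 s.fst_mem_Icc) := by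
  obtain ⟨hx0, hx1⟩ := s.fst_mem_Icc
  rcases hx0.eq_or_lt with hx0 | hx0
  · have hpt : (II.point s.1.1 s.fst_mem_Icc).1.1 = 0 := hx0.symm
    exact (topCong_izero_of_fst_eq_zero hx0.symm).trans (topCong_izero_of_fst_eq_zero hpt).symm
  rcases hx1.eq_or_lt with hx1 | hx1
  · have hs : s = II.point s.1.1 s.fst_mem_Icc :=
      II.ext rfl (le_antisymm (s.2.2.2.trans hx1.ge) s.2.2.1)
    exact hs ▸ TopCong.refl s
  obtain ⟨t, ht, hst⟩ := exists_eq_ipc_point_one hx1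
  have h := TopCong.pc_congr s.1.1 ⟨hx0, hx1⟩ (TopCong.refl (II.point 1 (by norm_num)))
    (topCong_izero_of_fst_eq_zero ht)
  rwa [← hst, ipc_point_one_izero] at h

lemma TopCong.of_fst_eq {s t : II} (h : s.1.1 = t.1.1) : TopCong s t := by
  have hpt : II.point s.1.1 s.fst_mem_Icc = II.point t.1.1 t.fst_mem_Icc := II.ext h h
  exact (topCong_point_fst s).trans (hpt ▸ (topCong_point_fst t).symm)

/-- The quotient of the interval algebra `𝓘` (with `⊕ = minmax`, `+_p`
componentwise, point `[0,0]`) by the top axiom `S ⊕ [0,0] = [0,0]` is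
isomorphic, via `[x,y] ↦ x`, to the pointed convex semilattice
`([0,1], min, +_p, 0)`: the lower-endpoint map identifies exactly the
congruent intervals (so the upper endpoint collapses), is surjective onto
`[0,1]`, and turns the operations into `min`, convex combination, and `0`. -/
theorem interval_top_quotient_iso_min :
    (∀ s t : II, TopCong s t ↔ s.1.1 = t.1.1) ∧
    (∀ x ∈ Set.Icc (0:ℝ) 1, ∃ s : II, s.1.1 = x) ∧
    (∀ s t : II, (iop s t).1.1 = min s.1.1 t.1.1) ∧
    (∀ p ∈ Set.Ioo (0:ℝ) 1, ∀ s t : II,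
      (ipc p s t).1.1 = p * s.1.1 + (1 - p) * t.1.1) ∧
    izero.1.1 = 0 :=
  ⟨fun _ _ => ⟨TopCong.fst_eq, TopCong.of_fst_eq⟩,
    fun x hx => ⟨II.point x hx, rfl⟩,
    iop_fst,
    fun _ hp => ipc_fst (Set.Ioo_subset_Icc_self hp),
    rfl⟩
end
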